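/- arXiv:1705.08270 — 2 statements merged into one kernel-verified Lean document; each statement's English description precedes it below -/
import Mathlib

section
/- Let V_n be the set of pairs of integers (x,y) with 2^{n−1} ≤ y < 2^n, 0 ≤ x ≤ y and (rep₂(y) choose rep₂(x)) > 0. Then #V_n = 2·3^{n−1} for all n ≥ 1. -/
/-!
Let `S(y)` (`binarySubwords y`) be the set of `x` whose binary word is a subword of that of
`y`; such `x` satisfy `x ≤ y`, so `V_n` is the disjoint union of the `S(y) × {y}` over
`2^(n-1) ≤ y < 2^n`. Appending a bit gives `S(2y + b) = S(y) ∪ (2 S(y) + b)`, and since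
prefixes of subwords are subwords the two parts meet exactly in the elements of `S(y)` with
last bit `b`. Summing over `b`, the overlaps add up to `|S(y)|`, so
`|S(2y)| + |S(2y+1)| = 3 |S(y)|`. Hence `∑_{y < 2^m} |S(y)| = 3^m`, and the block
`2^(n-1) ≤ y < 2^n` contributes `3^n - 3^(n-1)`.
-/

/-- The binomial coefficient of words: the number of occurrences of the second
word as a scattered subsequence of the first. -/
def wb {A : Type*} [DecidableEq A] : List A → List A → ℕ
  | _, [] => 1
  | [], _ :: _ => 0
  | a :: u, b :: v => wb u (b :: v) + (if a = b then wb u v else 0)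

/-- Binary representation of a natural number, most significant bit first,
with no leading zeros (`rep2 0 = []`). -/
def rep2 (n : ℕ) : List Bool := (Nat.bits n).reverse

open Finset Nat
open scoped List

theorem Nat.bit_injective (b : Bool) : Function.Injective (bit b) :=
  Function.LeftInverse.injective (div2_bit b)

theorem Finset.sum_range_two_mul {M : Type*} [AddCommMonoid M] (f : ℕ → M) (n : ℕ) :
    ∑ i ∈ range (2 * n), f i = ∑ i ∈ range n, (f (2 * i) + f (2 * i + 1)) := by
  induction n with
  | zero => simp
  | succ n ih =>
    rw [mul_add, mul_one, sum_range_succ, sum_range_succ, sum_range_succ, ih, add_assoc]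

theorem wb_pos_iff_sublist {A : Type*} [DecidableEq A] : ∀ u v : List A, 0 < wb u v ↔ v <+ u
  | _, [] => by simp [wb]
  | [], _ :: _ => by simp [wb]
  | a :: u, b :: v => by
    have ih₁ := wb_pos_iff_sublist u (b :: v)
    have ih₂ := wb_pos_iff_sublist u v
    rw [wb, List.sublist_cons_iff]
    by_cases hab : a = b
    · subst hab; simp [ih₁, ih₂]
    · simp [ih₁, hab, Ne.symm hab]

theorem rep2_zero : rep2 0 = [] := rfl

theorem rep2_bit {b : Bool} {n : ℕ} (h : n = 0 → b = true) :
    rep2 (bit b n) = rep2 n ++ [b] := by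
  simp [rep2, bits_append_bit n b h]

theorem rep2_eq_rep2_div2_append {x : ℕ} (hx : x ≠ 0) : rep2 x = rep2 x.div2 ++ [x.bodd] := by
  conv_lhs => rw [← bit_bodd_div2 x]
  exact rep2_bit (bit_ne_zero_iff.mp (by rwa [bit_bodd_div2]))

theorem rep2_eq_nil_iff {x : ℕ} : rep2 x = [] ↔ x = 0 := by
  refine ⟨fun h => by_contra fun hx => ?_, fun h => h ▸ rep2_zero⟩
  simp [rep2_eq_rep2_div2_append hx] at h

theorem rep2_div2_sublist (x : ℕ) : rep2 x.div2 <+ rep2 x := by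
  rcases eq_or_ne x 0 with rfl | hx
  · rfl
  · rw [rep2_eq_rep2_div2_append hx]
    exact List.sublist_append_left _ _

theorem rep2_sublist_rep2_bit_iff {x y : ℕ} {b : Bool} :
    rep2 x <+ rep2 (bit b y) ↔ rep2 x <+ rep2 y ∨ ∃ k, rep2 k <+ rep2 y ∧ bit b k = x := by
  by_cases hy : y = 0 → b = true
  · rw [rep2_bit hy, List.sublist_append_iff]
    constructor
    · rintro ⟨l₁, l₂, hx, h₁, h₂⟩
      rcases List.sublist_singleton.mp h₂ with rfl | rfl
      · left; simpa [hx] using h₁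
      · right
        have hx0 : x ≠ 0 := by rintro rfl; simp [rep2_zero] at hx
        rw [rep2_eq_rep2_div2_append hx0] at hx
        obtain ⟨rfl, hb⟩ := List.append_inj' hx rfl
        simp only [List.cons.injEq, and_true] at hb
        exact ⟨x.div2, h₁, by rw [← hb, bit_bodd_div2]⟩
    · rintro (h | ⟨k, hk, rfl⟩)
      · exact ⟨rep2 x, [], by simp, h, List.nil_sublist _⟩
      · rcases eq_or_ne (bit b k) 0 with h0 | h0
        · exact ⟨[], [], by simp [h0, rep2_zero], List.nil_sublist _, List.nil_sublist _⟩
        · exact ⟨rep2 k, [b], rep2_bit (bit_ne_zero_iff.mp h0), hk, List.Sublist.refl _⟩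
  · obtain ⟨rfl, rfl⟩ : y = 0 ∧ b = false := by simpa using hy
    simp [rep2_zero, rep2_eq_nil_iff, eq_comm]

theorem le_of_rep2_sublist {x y : ℕ} (h : rep2 x <+ rep2 y) : x ≤ y := by
  induction y using Nat.binaryRec' generalizing x with
  | zero => simpa [rep2_zero, rep2_eq_nil_iff] using h
  | bit b y _ ih =>
    rcases rep2_sublist_rep2_bit_iff.mp h with h | ⟨k, hk, rfl⟩
    · exact (ih h).trans (by rw [bit_val]; omega)
    · exact bit_le b (ih hk)

def binarySubwords (y : ℕ) : Finset ℕ := (range (y + 1)).filter fun x => rep2 x <+ rep2 y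

theorem mem_binarySubwords {x y : ℕ} : x ∈ binarySubwords y ↔ rep2 x <+ rep2 y := by
  simp only [binarySubwords, mem_filter, mem_range, Nat.lt_succ_iff, and_iff_right_iff_imp]
  exact le_of_rep2_sublist

theorem binarySubwords_bit (b : Bool) (y : ℕ) :
    binarySubwords (bit b y) = binarySubwords y ∪ (binarySubwords y).image (bit b) := by
  ext x
  simp [mem_binarySubwords, rep2_sublist_rep2_bit_iff]

theorem binarySubwords_inter_image_bit (b : Bool) (y : ℕ) :
    binarySubwords y ∩ (binarySubwords y).image (bit b) =
      (binarySubwords y).filter (·.bodd = b) := by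
  ext x
  simp only [mem_inter, mem_image, mem_filter]
  constructor
  · rintro ⟨hx, k, -, rfl⟩
    exact ⟨hx, bodd_bit b k⟩
  · rintro ⟨hx, rfl⟩
    refine ⟨hx, x.div2, ?_, bit_bodd_div2 x⟩
    exact mem_binarySubwords.mpr ((rep2_div2_sublist x).trans (mem_binarySubwords.mp hx))

theorem card_binarySubwords_bit_add_card_filter_bodd (b : Bool) (y : ℕ) :
    #(binarySubwords (bit b y)) + #((binarySubwords y).filter (·.bodd = b)) =
      2 * #(binarySubwords y) := by
  rw [binarySubwords_bit, ← binarySubwords_inter_image_bit, card_union_add_card_inter,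
    card_image_of_injective _ (bit_injective b), two_mul]

theorem card_binarySubwords_bit_false_add_bit_true (y : ℕ) :
    #(binarySubwords (bit false y)) + #(binarySubwords (bit true y)) =
      3 * #(binarySubwords y) := by
  have h₀ := card_binarySubwords_bit_add_card_filter_bodd false y
  have h₁ := card_binarySubwords_bit_add_card_filter_bodd true y
  have hsplit := card_filter_add_card_filter_not (s := binarySubwords y) (·.bodd = false)
  simp only [Bool.not_eq_false] at hsplit
  omega

theorem sum_card_binarySubwords_range (m : ℕ) :
    ∑ y ∈ range (2 ^ m), #(binarySubwords y) = 3 ^ m := by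
  induction m with
  | zero => rfl
  | succ m ih =>
    rw [pow_succ', sum_range_two_mul]
    simp_rw [← bit_true_apply, ← bit_false_apply, card_binarySubwords_bit_false_add_bit_true]
    rw [← mul_sum, ih, pow_succ']

theorem sum_card_binarySubwords_Ico (m : ℕ) :
    ∑ y ∈ Ico (2 ^ m) (2 ^ (m + 1)), #(binarySubwords y) = 2 * 3 ^ m := by
  have h := sum_range_add_sum_Ico (fun y => #(binarySubwords y))
    (pow_le_pow_right₀ one_le_two (m.le_add_right 1))
  rw [sum_card_binarySubwords_range, sum_card_binarySubwords_range, pow_succ 3 m] at h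
  omega

theorem stmt_11 (n : ℕ) (hn : 1 ≤ n) :
    ((Finset.range (2 ^ n) ×ˢ Finset.range (2 ^ n)).filter
      (fun p => 2 ^ (n - 1) ≤ p.2 ∧ p.1 ≤ p.2 ∧ 0 < wb (rep2 p.2) (rep2 p.1))).card =
      2 * 3 ^ (n - 1) := by
  obtain ⟨m, rfl⟩ : ∃ m, n = m + 1 := ⟨n - 1, by omega⟩
  have hpairs : (range (2 ^ (m + 1)) ×ˢ range (2 ^ (m + 1))).filter
      (fun p => 2 ^ m ≤ p.2 ∧ p.1 ≤ p.2 ∧ 0 < wb (rep2 p.2) (rep2 p.1)) =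
        (Ico (2 ^ m) (2 ^ (m + 1))).biUnion fun y => binarySubwords y ×ˢ {y} := by
    ext ⟨x, y⟩
    simp only [mem_filter, mem_product, mem_range, mem_biUnion, mem_Ico, mem_singleton,
      wb_pos_iff_sublist, mem_binarySubwords]
    constructor
    · rintro ⟨⟨-, hy⟩, hmy, -, hxy⟩
      exact ⟨y, ⟨hmy, hy⟩, hxy, rfl⟩
    · rintro ⟨y, ⟨hmy, hy⟩, hxy, rfl⟩
      have hle := le_of_rep2_sublist hxy
      exact ⟨⟨hle.trans_lt hy, hy⟩, hmy, hle, hxy⟩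
  rw [Nat.add_sub_cancel, hpairs, card_biUnion, ← sum_card_binarySubwords_Ico m]
  · simp
  · intro y₁ _ y₂ _ hne
    simp only [Function.onFun, disjoint_left, mem_product, mem_singleton]
    rintro ⟨x, y⟩ ⟨-, rfl⟩ ⟨-, rfl⟩
    exact hne rfl
end

section
/- Let u, v be binary words such that (u choose v) is odd, and let k be an integer with 2^k > |u|. Then (u 0^{2^k} 1 choose v 0^{2^k} 1) is odd. -/
variable {A : Type*} [DecidableEq A]

@[simp] lemma wb_nil_right (u : List A) : wb u [] = 1 := by cases u <;> rfl

@[simp] lemma wb_nil_left (b : A) (v : List A) : wb [] (b :: v) = 0 := rfl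

@[simp] lemma wb_cons (a : A) (u : List A) (b : A) (v : List A) :
    wb (a :: u) (b :: v) = wb u (b :: v) + (if a = b then wb u v else 0) := rfl

lemma wb_eq_zero_of_lt (u v : List A) (h : u.length < v.length) : wb u v = 0 := by
  induction u generalizing v with
  | nil => cases v with
    | nil => simp at h
    | cons b v' => rfl
  | cons a u ih =>
    cases v with
    | nil => simp at h
    | cons b v' =>
      simp only [List.length_cons, Nat.add_lt_add_iff_right] at h
      simp [ih (b :: v') (by simp [Nat.lt_succ_of_lt h]), ih _ h]

lemma wb_self (u : List A) : wb u u = 1 := by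
  induction u with
  | nil => rfl
  | cons a u ih =>
    simp [ih, wb_eq_zero_of_lt u (a :: u) (Nat.lt_succ_self _)]

lemma wb_append (u w t : List A) :
    wb (u ++ w) t = ∑ i ∈ Finset.range (t.length + 1), wb u (t.take i) * wb w (t.drop i) := by
  induction u generalizing t with
  | nil =>
    cases t with
    | nil => simp
    | cons b t' =>
      rw [Finset.sum_eq_single_of_mem 0 (by simp)]
      · simp
      · intro i hi hne
        obtain ⟨j, rfl⟩ := Nat.exists_eq_succ_of_ne_zero hne
        simp [List.take_succ_cons]
  | cons a u ih =>
    cases t with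
    | nil => simp
    | cons b t' =>
      simp only [List.cons_append, wb_cons, ih]
      by_cases hab : a = b <;>
        simp [hab, Finset.sum_range_succ', List.take_succ_cons, List.drop_succ_cons,
          add_mul, Finset.sum_add_distrib] <;> ring

lemma wb_zeros : ∀ N m : ℕ, m ≤ N →
    wb (List.replicate N false ++ [true]) (List.replicate m false ++ [true]) = N.choose m := by
  intro N
  induction N with
  | zero =>
    intro m hm
    interval_cases m
    simp [wb]
  | succ N ih =>
    intro m hm
    cases m with
    | zero =>
      have : ∀ K : ℕ, wb (List.replicate K false ++ [true]) [true] = 1 := by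
        intro K
        induction K with
        | zero => simp [wb]
        | succ K ihK => simpa [List.replicate_succ, wb] using ihK
      simpa using this (N + 1)
    | succ m =>
      have h1 : m + 1 ≤ N ∨ m + 1 = N + 1 := by omega
      simp only [List.replicate_succ, List.cons_append, wb_cons, if_pos rfl]
      have hrw : (false : Bool) :: (List.replicate m false ++ [true])
          = List.replicate (m + 1) false ++ [true] := by simp [List.replicate_succ]
      rw [hrw]
      rcases h1 with h1 | h1
      · rw [ih _ h1, ih _ (by omega)]
        simp [Nat.choose_succ_succ, Nat.add_comm]
      · obtain rfl : m = N := by omega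
        rw [wb_eq_zero_of_lt _ _ (by simp), ih _ (by omega)]
        simp [Nat.choose_succ_succ, Nat.choose_eq_zero_of_lt]

lemma odd_iff_zmod (n : ℕ) : Odd n ↔ (n : ZMod 2) = 1 := by
  rw [Nat.odd_iff]
  constructor
  · intro h
    rw [← ZMod.natCast_mod n 2, h, Nat.cast_one]
  · intro h
    rcases Nat.mod_two_eq_zero_or_one n with h2 | h2
    · rw [← ZMod.natCast_mod n 2, h2, Nat.cast_zero] at h
      exact absurd h (by decide)
    · exact h2

theorem stmt_15 (u v : List Bool) (h : Odd (wb u v)) (k : ℕ) (hk : u.length < 2 ^ k) :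
    Odd (wb (u ++ List.replicate (2 ^ k) false ++ [true])
            (v ++ List.replicate (2 ^ k) false ++ [true])) := by
  set N := 2 ^ k with hN
  set S : List Bool := List.replicate N false ++ [true] with hS
  have hSlen : S.length = N + 1 := by simp [hS]
  rw [List.append_assoc, List.append_assoc, ← hS]
  set T : List Bool := v ++ S with hT
  have hTlen : T.length = v.length + N + 1 := by simp [hT, hSlen]; omega
  rw [odd_iff_zmod, wb_append, Nat.cast_sum]
  rw [Finset.sum_eq_single_of_mem v.length (by simp [Finset.mem_range]; omega)]
  · rw [hT, List.take_left, List.drop_left, wb_self]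
    rw [odd_iff_zmod] at h
    push_cast
    simp [h]
  · intro i hi hne
    simp only [Finset.mem_range] at hi
    rcases lt_or_gt_of_ne hne with hlt | hgt
    · -- i < v.length : second factor vanishes (pattern too long)
      have : wb S (T.drop i) = 0 := by
        apply wb_eq_zero_of_lt
        rw [List.length_drop, hSlen, hTlen]
        omega
      simp [this]
    · -- i > v.length
      by_cases hu : u.length < i
      · have : wb u (T.take i) = 0 := by
          apply wb_eq_zero_of_lt
          rw [List.length_take]
          omega
        simp [this]
      · push_neg at hu
        -- v.length < i ≤ u.length < N
        set j := i - v.length with hj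
        have hj1 : 1 ≤ j := by omega
        have hjN : j < N := by omega
        have hdrop : T.drop i = List.replicate (N - j) false ++ [true] := by
          rw [hT, List.drop_append,
            List.drop_eq_nil_of_le (le_of_lt hgt), hS,
            List.drop_append, List.drop_replicate, List.nil_append]
          have e1 : i - v.length = j := rfl
          have e2 : j - (List.replicate N (false : Bool)).length = 0 := by
            simp only [List.length_replicate]; omega
          rw [e1, e2, List.drop_zero]
        have : wb S (T.drop i) = N.choose (N - j) := by
          rw [hdrop, hS]
          exact wb_zeros N (N - j) (by omega)
        rw [Nat.cast_mul, this]
        have hdvd : (2 : ℕ) ∣ N.choose (N - j) :=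
          Nat.Prime.dvd_choose_pow Nat.prime_two (by omega) (by rw [← hN]; omega)
        rw [(ZMod.natCast_eq_zero_iff _ 2).2 hdvd, mul_zero]
end
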